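/- Satisfiability-preserving first-order encoding of spatial conjunction: if F′ and F″ are first-order formulas over L = {A₁,…,Aₙ} ∪ {f₁,…,f_m} (without spatial conjunction or fixpoints), then F′ ⋆ F″ is satisfiable iff the first-order formula btr(F′ ⋆ F″) over the extended vocabulary L ∪ {A′₁,…,A′ₙ, f′₁,…,f′_m, A″₁,…,A″ₙ, f″₁,…,f″_m} is satisfiable, where btr(F′ ⋆ F″) ≡ ⋀ᵢ Split₁(Aᵢ, A′ᵢ, A″ᵢ) ∧ ⋀ᵢ Split₂(fᵢ, f′ᵢ, f″ᵢ) ∧ F′[Aᵢ := A′ᵢ, fᵢ := f′ᵢ] ∧ F″[Aᵢ := A″ᵢ, fᵢ := f″ᵢ]. -/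
import Mathlib


/-- An environment (model with variable assignment): interprets unary predicate
symbols from `𝒜`, binary predicate symbols from `ℱ`, and variables from `V`
over the domain `D`. -/
structure Env (𝒜 ℱ V D : Type) where
  un : 𝒜 → D → Prop
  bin : ℱ → D → D → Prop
  var : V → D

variable {𝒜 ℱ V D : Type}

/-- `e.Split e₁ e₂`: the relations of `e` split as a disjoint union into `e₁`
and `e₂`, and the variable assignments agree with those of `e`. -/
def Env.Split (e e₁ e₂ : Env 𝒜 ℱ V D) : Prop :=
  e₁.var = e.var ∧ e₂.var = e.var ∧
  (∀ A d, (e.un A d ↔ (e₁.un A d ∨ e₂.un A d)) ∧ ¬(e₁.un A d ∧ e₂.un A d)) ∧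
  (∀ f d₁ d₂, (e.bin f d₁ d₂ ↔ (e₁.bin f d₁ d₂ ∨ e₂.bin f d₁ d₂)) ∧
      ¬(e₁.bin f d₁ d₂ ∧ e₂.bin f d₁ d₂))

/-- Spatial conjunction of predicates on environments. -/
def spand (P Q : Env 𝒜 ℱ V D → Prop) (e : Env 𝒜 ℱ V D) : Prop :=
  ∃ e₁ e₂, e.Split e₁ e₂ ∧ P e₁ ∧ Q e₂

/-! ## Syntax and semantics of first-order logic with counting quantifiers -/

/-- Counting quantifier specifications: `∃^{=k}` and `∃^{≥k}`. -/
inductive CQ : Type where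
  | exact : ℕ → CQ
  | atLeast : ℕ → CQ
deriving DecidableEq

/-- A counting quantifier specification is satisfied by a cardinality `c`. -/
def CQ.sat : CQ → ℕ → Prop
  | .exact k, c => c = k
  | .atLeast k, c => k ≤ c

/-- `c ∈ C_{k+1}`: `c` is `=i` for some `i ≤ k`, or `≥ k+1`. -/
def CQ.degLE (k : ℕ) : CQ → Prop
  | .exact i => i ≤ k
  | .atLeast i => i = k + 1

/-- Formulas of first-order predicate calculus with equality and counting
quantifiers, over unary symbols `𝒜`, binary symbols `ℱ`, variables `V`. -/
inductive Fml (𝒜 ℱ V : Type) : Type where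
  | un : 𝒜 → V → Fml 𝒜 ℱ V
  | bin : ℱ → V → V → Fml 𝒜 ℱ V
  | eq : V → V → Fml 𝒜 ℱ V
  | fls : Fml 𝒜 ℱ V
  | and : Fml 𝒜 ℱ V → Fml 𝒜 ℱ V → Fml 𝒜 ℱ V
  | or : Fml 𝒜 ℱ V → Fml 𝒜 ℱ V → Fml 𝒜 ℱ V
  | not : Fml 𝒜 ℱ V → Fml 𝒜 ℱ V
  | cnt : CQ → V → Fml 𝒜 ℱ V → Fml 𝒜 ℱ V

/-- Update the value of a variable in an environment. -/
def Env.updVar [DecidableEq V] (e : Env 𝒜 ℱ V D) (v : V) (d : D) : Env 𝒜 ℱ V D :=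
  { e with var := Function.update e.var v d }

/-- Satisfaction of a formula in an environment. -/
def Fml.Sat [DecidableEq V] : Fml 𝒜 ℱ V → Env 𝒜 ℱ V D → Prop
  | .un A v, e => e.un A (e.var v)
  | .bin f v w, e => e.bin f (e.var v) (e.var w)
  | .eq v w, e => e.var v = e.var w
  | .fls, _ => False
  | .and F G, e => F.Sat e ∧ G.Sat e
  | .or F G, e => F.Sat e ∨ G.Sat e
  | .not F, e => ¬ F.Sat e
  | .cnt c v F, e => c.sat {d : D | F.Sat (e.updVar v d)}.ncard

/-- Quantifier depth; each counting quantifier counts as one quantifier. -/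
def Fml.qdepth : Fml 𝒜 ℱ V → ℕ
  | .un _ _ => 0
  | .bin _ _ _ => 0
  | .eq _ _ => 0
  | .fls => 0
  | .and F G => max F.qdepth G.qdepth
  | .or F G => max F.qdepth G.qdepth
  | .not F => F.qdepth
  | .cnt _ _ F => F.qdepth + 1

/-- Free variables of a formula. -/
def Fml.fv [DecidableEq V] : Fml 𝒜 ℱ V → Finset V
  | .un _ v => {v}
  | .bin _ v w => {v, w}
  | .eq v w => {v, w}
  | .fls => ∅
  | .and F G => F.fv ∪ G.fv
  | .or F G => F.fv ∪ G.fv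
  | .not F => F.fv
  | .cnt _ v F => F.fv.erase v

/-- `F.DegLE k`: `F` has counting degree at most `k`, i.e. all counting
quantifiers of `F` are `∃^c` with `c ∈ C_{k+1}`. -/
def Fml.DegLE (k : ℕ) : Fml 𝒜 ℱ V → Prop
  | .un _ _ => True
  | .bin _ _ _ => True
  | .eq _ _ => True
  | .fls => True
  | .and F G => F.DegLE k ∧ G.DegLE k
  | .or F G => F.DegLE k ∧ G.DegLE k
  | .not F => F.DegLE k
  | .cnt c _ F => c.degLE k ∧ F.DegLE k

/-! ## Atomic formulas, complete atomic types -/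

/-- Atomic formulas over unary symbols `𝒜`, binary symbols `ℱ`, variables `V`
(including equality atoms). -/
inductive Atom (𝒜 ℱ V : Type) : Type where
  | un : 𝒜 → V → Atom 𝒜 ℱ V
  | bin : ℱ → V → V → Atom 𝒜 ℱ V
  | eq : V → V → Atom 𝒜 ℱ V
deriving DecidableEq

def Atom.toFml : Atom 𝒜 ℱ V → Fml 𝒜 ℱ V
  | .un A v => .un A v
  | .bin f v w => .bin f v w
  | .eq v w => .eq v w

/-- The variables occurring in an atomic formula. -/
def Atom.varset [DecidableEq V] : Atom 𝒜 ℱ V → Finset V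
  | .un _ v => {v}
  | .bin _ v w => {v, w}
  | .eq v w => {v, w}

/-- Whether an atom is an equality atom. -/
def Atom.isEq : Atom 𝒜 ℱ V → Bool
  | .eq _ _ => true
  | _ => false

def atomEquiv (𝒜 ℱ V : Type) :
    Atom 𝒜 ℱ V ≃ ((𝒜 × V) ⊕ ((ℱ × V × V) ⊕ (V × V))) where
  toFun a := match a with
    | .un A v => Sum.inl (A, v)
    | .bin f v w => Sum.inr (Sum.inl (f, v, w))
    | .eq v w => Sum.inr (Sum.inr (v, w))
  invFun s := match s with
    | Sum.inl (A, v) => .un A v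
    | Sum.inr (Sum.inl (f, v, w)) => .bin f v w
    | Sum.inr (Sum.inr (v, w)) => .eq v w
  left_inv a := by cases a <;> rfl
  right_inv s := by rcases s with ⟨A, v⟩ | ⟨f, v, w⟩ | ⟨v, w⟩ <;> rfl

instance [Fintype 𝒜] [Fintype ℱ] [Fintype V] : Fintype (Atom 𝒜 ℱ V) :=
  Fintype.ofEquiv _ (atomEquiv 𝒜 ℱ V).symm

/-- Conjunction of a list of formulas (empty conjunction is `¬⊥`, i.e. true). -/
def listConj (l : List (Fml 𝒜 ℱ V)) : Fml 𝒜 ℱ V := l.foldr .and (.not .fls)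

/-- Disjunction of a list of formulas (empty disjunction is `⊥`). -/
def listDisj (l : List (Fml 𝒜 ℱ V)) : Fml 𝒜 ℱ V := l.foldr .or .fls

/-- Conjunction of a list of atoms, each taken positively or negatively
according to the sign assignment `σ`. -/
def signedConj (l : List (Atom 𝒜 ℱ V)) (σ : Atom 𝒜 ℱ V → Bool) : Fml 𝒜 ℱ V :=
  listConj (l.map fun a => if σ a then a.toFml else .not a.toFml)

/-- Rename the predicate symbols of a formula. -/
def Fml.mapSym {𝒜 ℱ 𝒜' ℱ' V : Type} (fA : 𝒜 → 𝒜') (fF : ℱ → ℱ') :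
    Fml 𝒜 ℱ V → Fml 𝒜' ℱ' V
  | .un A v => .un (fA A) v
  | .bin f v w => .bin (fF f) v w
  | .eq v w => .eq v w
  | .fls => .fls
  | .and F G => .and (F.mapSym fA fF) (G.mapSym fA fF)
  | .or F G => .or (F.mapSym fA fF) (G.mapSym fA fF)
  | .not F => .not (F.mapSym fA fF)
  | .cnt c v F => .cnt c v (F.mapSym fA fF)

/-- Universal quantification, encoded as `∃^{=0} v. ¬F`. -/
def Fml.all (v : V) (F : Fml 𝒜 ℱ V) : Fml 𝒜 ℱ V := .cnt (.exact 0) v (.not F)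

/-- Biimplication of formulas. -/
def Fml.iff (F G : Fml 𝒜 ℱ V) : Fml 𝒜 ℱ V :=
  (F.and G).or ((Fml.not F).and (Fml.not G))

/-- `Split₁(A, A′, A″) ≡ ∀x. (A(x) ↔ (A′(x) ∨ A″(x))) ∧ ¬(A′(x) ∧ A″(x))`.
Variables are natural numbers; `x` is the variable `0`. -/
def split1Fml {𝒜 ℱ : Type} (A A' A'' : 𝒜) : Fml 𝒜 ℱ ℕ :=
  Fml.all 0 <|
    ((Fml.un A 0).iff ((Fml.un A' 0).or (Fml.un A'' 0))).and
      (.not ((Fml.un A' 0).and (Fml.un A'' 0)))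

/-- `Split₂(f, f′, f″) ≡
∀x y. (f(x,y) ↔ (f′(x,y) ∨ f″(x,y))) ∧ ¬(f′(x,y) ∧ f″(x,y))`.
`x`, `y` are the variables `0`, `1`. -/
def split2Fml {𝒜 ℱ : Type} (f f' f'' : ℱ) : Fml 𝒜 ℱ ℕ :=
  Fml.all 0 <| Fml.all 1 <|
    ((Fml.bin f 0 1).iff ((Fml.bin f' 0 1).or (Fml.bin f'' 0 1))).and
      (.not ((Fml.bin f' 0 1).and (Fml.bin f'' 0 1)))

/-- The extended vocabulary: `Sum.inl s` is the original symbol `s`,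
`Sum.inr (Sum.inl s)` is the primed copy `s′`, and `Sum.inr (Sum.inr s)` is
the double-primed copy `s″`. -/
abbrev ExtSym (S : Type) : Type := S ⊕ (S ⊕ S)

/-- The first-order encoding `btr(F′ ⋆ F″)` of a spatial conjunction over the
extended vocabulary:
`⋀ᵢ Split₁(Aᵢ, A′ᵢ, A″ᵢ) ∧ ⋀ᵢ Split₂(fᵢ, f′ᵢ, f″ᵢ) ∧ F′[Aᵢ:=A′ᵢ, fᵢ:=f′ᵢ] ∧
F″[Aᵢ:=A″ᵢ, fᵢ:=f″ᵢ]`. -/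
noncomputable def btr {𝒜 ℱ : Type} [Fintype 𝒜] [Fintype ℱ]
    (F' F'' : Fml 𝒜 ℱ ℕ) : Fml (ExtSym 𝒜) (ExtSym ℱ) ℕ :=
  (listConj ((Finset.univ : Finset 𝒜).toList.map fun A =>
      split1Fml (Sum.inl A) (Sum.inr (Sum.inl A)) (Sum.inr (Sum.inr A)))).and <|
  (listConj ((Finset.univ : Finset ℱ).toList.map fun f =>
      split2Fml (Sum.inl f) (Sum.inr (Sum.inl f)) (Sum.inr (Sum.inr f)))).and <|
  (F'.mapSym (fun A => Sum.inr (Sum.inl A)) (fun f => Sum.inr (Sum.inl f))).and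
  (F''.mapSym (fun A => Sum.inr (Sum.inr A)) (fun f => Sum.inr (Sum.inr f)))

section Aux

variable {𝒜' ℱ' : Type}

/-- Restrict an environment along a renaming of symbols. -/
def Env.restr (fA : 𝒜 → 𝒜') (fF : ℱ → ℱ') (e : Env 𝒜' ℱ' V D) : Env 𝒜 ℱ V D :=
  ⟨fun A => e.un (fA A), fun f => e.bin (fF f), e.var⟩

lemma sat_mapSym [DecidableEq V] (fA : 𝒜 → 𝒜') (fF : ℱ → ℱ')
    (F : Fml 𝒜 ℱ V) (e : Env 𝒜' ℱ' V D) :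
    (F.mapSym fA fF).Sat e ↔ F.Sat (e.restr fA fF) := by
  induction F generalizing e with
  | un A v => rfl
  | bin f v w => rfl
  | eq v w => rfl
  | fls => rfl
  | and F G ihF ihG => exact and_congr (ihF e) (ihG e)
  | or F G ihF ihG => exact or_congr (ihF e) (ihG e)
  | not F ihF => exact not_congr (ihF e)
  | cnt c v F ih =>
      show c.sat _ ↔ c.sat _
      congr! 2
      ext d
      exact ih (e.updVar v d)

lemma sat_listConj [DecidableEq V] (l : List (Fml 𝒜 ℱ V)) (e : Env 𝒜 ℱ V D) :
    (listConj l).Sat e ↔ ∀ F ∈ l, F.Sat e := by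
  induction l with
  | nil => simp [listConj, Fml.Sat]
  | cons F l ih =>
      simp only [listConj, List.foldr] at ih ⊢
      show F.Sat e ∧ _ ↔ _
      rw [ih]; simp

lemma sat_all [DecidableEq V] [Finite D] (v : V) (F : Fml 𝒜 ℱ V)
    (e : Env 𝒜 ℱ V D) :
    (Fml.all v F).Sat e ↔ ∀ d, F.Sat (e.updVar v d) := by
  show ({d : D | ¬ F.Sat (e.updVar v d)}.ncard = 0) ↔ _
  rw [Set.ncard_eq_zero (Set.toFinite _), Set.eq_empty_iff_forall_notMem]
  simp

lemma sat_iff' [DecidableEq V] (F G : Fml 𝒜 ℱ V) (e : Env 𝒜 ℱ V D) :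
    (F.iff G).Sat e ↔ (F.Sat e ↔ G.Sat e) := by
  show (F.Sat e ∧ G.Sat e) ∨ (¬ F.Sat e ∧ ¬ G.Sat e) ↔ _
  tauto

lemma sat_split1Fml [Finite D] (A A' A'' : 𝒜) (e : Env 𝒜 ℱ ℕ D) :
    (split1Fml (ℱ := ℱ) A A' A'').Sat e ↔
      ∀ d, (e.un A d ↔ e.un A' d ∨ e.un A'' d) ∧ ¬(e.un A' d ∧ e.un A'' d) := by
  rw [split1Fml, sat_all]
  refine forall_congr' fun d => ?_
  show (_ ∧ ¬ _) ↔ _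
  rw [sat_iff']
  show ((e.updVar 0 d).un A ((e.updVar 0 d).var 0) ↔ _ ∨ _) ∧ ¬ (_ ∧ _) ↔ _
  simp [Fml.Sat, Env.updVar]

lemma sat_split2Fml [Finite D] (f f' f'' : ℱ) (e : Env 𝒜 ℱ ℕ D) :
    (split2Fml (𝒜 := 𝒜) f f' f'').Sat e ↔
      ∀ d₁ d₂, (e.bin f d₁ d₂ ↔ e.bin f' d₁ d₂ ∨ e.bin f'' d₁ d₂) ∧
        ¬(e.bin f' d₁ d₂ ∧ e.bin f'' d₁ d₂) := by
  rw [split2Fml, sat_all]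
  refine forall_congr' fun d₁ => ?_
  rw [sat_all]
  refine forall_congr' fun d₂ => ?_
  show (_ ∧ ¬ _) ↔ _
  rw [sat_iff']
  show (((e.updVar 0 d₁).updVar 1 d₂).bin f (((e.updVar 0 d₁).updVar 1 d₂).var 0)
      (((e.updVar 0 d₁).updVar 1 d₂).var 1) ↔ _ ∨ _) ∧ ¬ (_ ∧ _) ↔ _
  simp [Fml.Sat, Env.updVar, Function.update]

end Aux

/-- **Satisfiability-preserving first-order encoding of spatial
conjunction.** If `F′` and `F″` are first-order formulas over
`L = {A₁,…,Aₙ} ∪ {f₁,…,f_m}`, then `F′ ⋆ F″` is satisfiable (in some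
environment over some finite nonempty domain) iff the first-order formula
`btr(F′ ⋆ F″)` over the extended vocabulary is satisfiable. -/
theorem btr_equisatisfiable {𝒜 ℱ : Type}
    [Fintype 𝒜] [DecidableEq 𝒜] [Fintype ℱ] [DecidableEq ℱ]
    (F' F'' : Fml 𝒜 ℱ ℕ) :
    (∃ (D : Type) (_ : Finite D) (_ : Nonempty D) (e : Env 𝒜 ℱ ℕ D),
        spand (fun e' => F'.Sat e') (fun e' => F''.Sat e') e) ↔
    (∃ (D : Type) (_ : Finite D) (_ : Nonempty D)
        (e : Env (ExtSym 𝒜) (ExtSym ℱ) ℕ D),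
        (btr F' F'').Sat e) := by
  constructor
  · rintro ⟨D, hFin, hNe, e, e₁, e₂, ⟨hv₁, hv₂, hun, hbin⟩, hF', hF''⟩
    set E : Env (ExtSym 𝒜) (ExtSym ℱ) ℕ D := ⟨fun s => match s with
        | Sum.inl A => e.un A
        | Sum.inr (Sum.inl A) => e₁.un A
        | Sum.inr (Sum.inr A) => e₂.un A,
      fun s => match s with
        | Sum.inl f => e.bin f
        | Sum.inr (Sum.inl f) => e₁.bin f
        | Sum.inr (Sum.inr f) => e₂.bin f,
      e.var⟩ with hE
    refine ⟨D, hFin, hNe, E, ?_, ?_, ?_, ?_⟩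
    · rw [sat_listConj]
      intro F hF
      simp only [List.mem_map] at hF
      obtain ⟨A, -, rfl⟩ := hF
      rw [sat_split1Fml]
      exact hun A
    · rw [sat_listConj]
      intro F hF
      simp only [List.mem_map] at hF
      obtain ⟨f, -, rfl⟩ := hF
      rw [sat_split2Fml]
      exact hbin f
    · rw [sat_mapSym]
      have : E.restr (fun A => Sum.inr (Sum.inl A))
          (fun f => Sum.inr (Sum.inl f)) = e₁ := by
        cases e₁; simp [Env.restr, hE]; exact hv₁.symm
      rw [this]; exact hF'
    · rw [sat_mapSym]
      have : E.restr (fun A => Sum.inr (Sum.inr A))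
          (fun f => Sum.inr (Sum.inr f)) = e₂ := by
        cases e₂; simp [Env.restr, hE]; exact hv₂.symm
      rw [this]; exact hF''
  · rintro ⟨D, hFin, hNe, E, h1, h2, h3, h4⟩
    refine ⟨D, hFin, hNe, E.restr Sum.inl Sum.inl,
      E.restr (fun A => Sum.inr (Sum.inl A)) (fun f => Sum.inr (Sum.inl f)),
      E.restr (fun A => Sum.inr (Sum.inr A)) (fun f => Sum.inr (Sum.inr f)),
      ⟨rfl, rfl, ?_, ?_⟩, ?_, ?_⟩
    · intro A d
      rw [sat_listConj] at h1
      have := h1 _ (List.mem_map.mpr ⟨A, by simp, rfl⟩)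
      rw [sat_split1Fml] at this
      exact this d
    · intro f d₁ d₂
      rw [sat_listConj] at h2
      have := h2 _ (List.mem_map.mpr ⟨f, by simp, rfl⟩)
      rw [sat_split2Fml] at this
      exact this d₁ d₂
    · exact (sat_mapSym _ _ _ _).mp h3
    · exact (sat_mapSym _ _ _ _).mp h4
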